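/- Let ω ∈ {0,1,2}^ℕ be such that i_0(ω), i_1(ω), i_2(ω) and i_0(σω), i_1(σω), i_2(σω) are all finite, and write o(x) for the order of x ∈ Aut(T). Then o(a c_ω a b_ω) = o(a b_ω a c_ω), and this common order equals max{o(a c_{σω}), o(a b_{σω})} if ω_1 = 0, equals o(a c_{σω}) if ω_1 = 1, and equals o(a b_{σω}) if ω_1 = 2. -/

import Mathlib

namespace Grig

/-- Sequences ω ∈ {0,1,2}^ℕ (0-indexed: `ω n` is the paper's ω_{n+1}). -/
abbrev Seq := ℕ → Fin 3

/-- The shifted sequence σω. -/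
def shift (ω : Seq) : Seq := fun n => ω (n + 1)

/-- The n-fold shifted sequence σⁿω. -/
def shiftn (n : ℕ) (ω : Seq) : Seq := fun m => ω (m + n)

/-- The rooted automorphism `a`, as a map on words over {0,1} (encoded as `List Bool`). -/
def aMap : List Bool → List Bool
  | [] => []
  | x :: w => (!x) :: w

lemma aMap_invol : ∀ w, aMap (aMap w) = w := by
  intro w; cases w <;> simp [aMap]

/-- The rooted automorphism `a`. -/
def aPerm : Equiv.Perm (List Bool) := ⟨aMap, aMap, aMap_invol, aMap_invol⟩

/-- The directed automorphism with "trivial tag" `k` of the Grigorchuk group `G_ω`: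
`k = 2` gives `b_ω`, `k = 1` gives `c_ω`, `k = 0` gives `d_ω`.  Its section at the
vertex 1 is the corresponding automorphism for σω, and its section at the vertex 0
is `a` if ω₁ ≠ k and trivial if ω₁ = k. -/
def genMap (k : Fin 3) : Seq → List Bool → List Bool
  | _, [] => []
  | ω, false :: w => false :: (if ω 0 = k then w else aMap w)
  | ω, true :: w => true :: genMap k (shift ω) w

lemma genMap_invol (k : Fin 3) : ∀ (w : List Bool) (ω : Seq), genMap k ω (genMap k ω w) = w := by
  intro w
  induction w with
  | nil => intro ω; rfl
  | cons x w ih =>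
      intro ω
      cases x with
      | false => by_cases h : ω 0 = k <;> simp [genMap, h, aMap_invol]
      | true => simp [genMap, ih]

def genPerm (k : Fin 3) (ω : Seq) : Equiv.Perm (List Bool) :=
  ⟨genMap k ω, genMap k ω, fun w => genMap_invol k w ω, fun w => genMap_invol k w ω⟩

/-- The generator `b_ω`. -/
def b (ω : Seq) : Equiv.Perm (List Bool) := genPerm 2 ω
/-- The generator `c_ω`. -/
def c (ω : Seq) : Equiv.Perm (List Bool) := genPerm 1 ω
/-- The generator `d_ω`. -/
def d (ω : Seq) : Equiv.Perm (List Bool) := genPerm 0 ω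

/-- The Grigorchuk group `G_ω = ⟨a, b_ω, c_ω, d_ω⟩`, as a subgroup of the group of
permutations of the vertices of the binary rooted tree.  (Every generator preserves
word length and prefixes, so `G_ω` consists of automorphisms of the tree.) -/
def G (ω : Seq) : Subgroup (Equiv.Perm (List Bool)) :=
  Subgroup.closure {aPerm, b ω, c ω, d ω}

lemma aPerm_mem (ω : Seq) : aPerm ∈ G ω := Subgroup.subset_closure (by simp)
lemma b_mem (ω : Seq) : b ω ∈ G ω := Subgroup.subset_closure (by simp)
lemma c_mem (ω : Seq) : c ω ∈ G ω := Subgroup.subset_closure (by simp)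
lemma d_mem (ω : Seq) : d ω ∈ G ω := Subgroup.subset_closure (by simp)

/-- `a` as an element of `G_ω`. -/
def aSub (ω : Seq) : ↥(G ω) := ⟨aPerm, aPerm_mem ω⟩
/-- `b_ω` as an element of `G_ω`. -/
def bSub (ω : Seq) : ↥(G ω) := ⟨b ω, b_mem ω⟩
/-- `c_ω` as an element of `G_ω`. -/
def cSub (ω : Seq) : ↥(G ω) := ⟨c ω, c_mem ω⟩
/-- `d_ω` as an element of `G_ω`. -/
def dSub (ω : Seq) : ↥(G ω) := ⟨d ω, d_mem ω⟩

/-- The subgroup of permutations of the tree fixing every vertex of level `n`. -/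
def levelStab (n : ℕ) : Subgroup (Equiv.Perm (List Bool)) where
  carrier := {f | ∀ w : List Bool, w.length = n → f w = w}
  one_mem' := by intro w _; rfl
  mul_mem' := by
    intro f g hf hg w hw
    rw [Equiv.Perm.mul_apply, hg w hw, hf w hw]
  inv_mem' := by
    intro f hf w hw
    calc f⁻¹ w = f⁻¹ (f w) := by rw [hf w hw]
    _ = w := f.symm_apply_apply w

/-- The `n`-th level stabiliser `St_{G_ω}(n)` (as a subgroup of the ambient
permutation group). -/
def St (ω : Seq) (n : ℕ) : Subgroup (Equiv.Perm (List Bool)) := G ω ⊓ levelStab n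

/-- The `n`-th level stabiliser `St_{G_ω}(n)` seen as a subgroup of `G_ω`. -/
def stab (ω : Seq) (n : ℕ) : Subgroup ↥(G ω) := (levelStab n).subgroupOf (G ω)

lemma aMap_length (w : List Bool) : (aMap w).length = w.length := by
  cases w <;> simp [aMap]

lemma genMap_length (k : Fin 3) :
    ∀ (w : List Bool) (ω : Seq), (genMap k ω w).length = w.length := by
  intro w
  induction w with
  | nil => intro ω; rfl
  | cons x w ih =>
      intro ω
      cases x with
      | false => by_cases h : ω 0 = k <;> simp [genMap, h, aMap_length]
      | true => simp [genMap, ih]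

/-- The subgroup of length-preserving permutations of the set of words. -/
def lenPres : Subgroup (Equiv.Perm (List Bool)) where
  carrier := {f | ∀ w : List Bool, (f w).length = w.length}
  one_mem' := by intro w; rfl
  mul_mem' := by
    intro f g hf hg w
    rw [Equiv.Perm.mul_apply, hf, hg]
  inv_mem' := by
    intro f hf w
    conv_rhs => rw [← f.apply_symm_apply w, ← Equiv.Perm.inv_def]
    rw [hf]

lemma G_le_lenPres (ω : Seq) : G ω ≤ lenPres := by
  rw [G]
  refine (Subgroup.closure_le _).2 ?_
  intro x hx
  simp only [Set.mem_insert_iff, Set.mem_singleton_iff] at hx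
  rcases hx with rfl | rfl | rfl | rfl
  · exact fun w => aMap_length w
  · exact fun w => genMap_length 2 w ω
  · exact fun w => genMap_length 1 w ω
  · exact fun w => genMap_length 0 w ω

instance stab_normal (ω : Seq) (n : ℕ) : (stab ω n).Normal := by
  constructor
  intro h hh g
  simp only [stab, Subgroup.mem_subgroupOf] at hh ⊢
  intro w hw
  have hginv : ((g : Equiv.Perm (List Bool))⁻¹ w).length = n := by
    rw [G_le_lenPres ω ((G ω).inv_mem g.2) w, hw]
  have : ((h : Equiv.Perm (List Bool))) ((g : Equiv.Perm (List Bool))⁻¹ w)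
      = (g : Equiv.Perm (List Bool))⁻¹ w := hh _ hginv
  simp only [Subgroup.coe_mul, InvMemClass.coe_inv, Equiv.Perm.mul_apply]
  rw [this, Equiv.Perm.inv_def, Equiv.apply_symm_apply]

/-- A (spherical) system of generators of a group. -/
def SphericalSystem {Q : Type*} [Group Q] {r : ℕ} (T : Fin r → Q) : Prop :=
  3 ≤ r ∧ (∀ i, T i ≠ 1) ∧ Subgroup.closure (Set.range T) = ⊤ ∧ (List.ofFn T).prod = 1

/-- The set Σ(T): the union of all conjugates of the cyclic subgroups generated by
the entries of `T`. -/
def SigmaSet {Q : Type*} [Group Q] {r : ℕ} (T : Fin r → Q) : Set Q :=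
  ⋃ (g : Q) (i : Fin r), (fun x => g⁻¹ * x * g) '' (Subgroup.zpowers (T i) : Set Q)

/-- An (unmixed) ramification structure of size `(r₁, r₂)` for a group `Q`. -/
def HasRamificationStructure (Q : Type*) [Group Q] (r₁ r₂ : ℕ) : Prop :=
  ∃ (T₁ : Fin r₁ → Q) (T₂ : Fin r₂ → Q),
    SphericalSystem T₁ ∧ SphericalSystem T₂ ∧ SigmaSet T₁ ∩ SigmaSet T₂ = {1}

/-- `i_k(ω) = min {n ≥ 1 : ω_n = k}` (meaningful when some entry of ω equals `k`;
with our 0-indexing this is `sInf {n | ω n = k} + 1`). -/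
noncomputable def ikFin (k : Fin 3) (ω : Seq) : ℕ := sInf {n | ω n = k} + 1

/-- `m(ω) = max {n ≥ 1 : ω_1 = ⋯ = ω_n}` for a non-constant sequence ω;
with our 0-indexing this is the least index where ω differs from ω 0. -/
noncomputable def mval (ω : Seq) : ℕ := sInf {n | ω n ≠ ω 0}


/-- The normal closure of the element `x` relative to the subgroup `H`:
the subgroup generated by all `H`-conjugates of `x`. -/
def nclIn (H : Subgroup (Equiv.Perm (List Bool))) (x : Equiv.Perm (List Bool)) :
    Subgroup (Equiv.Perm (List Bool)) :=
  Subgroup.closure {y | ∃ g ∈ H, y = g * x * g⁻¹}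

/-- The `d`-generator of `G_ω`: `d_ω` if ω₁ = 0, `c_ω` if ω₁ = 1 and `b_ω` if ω₁ = 2;
with our encoding this is simply `genPerm (ω 0) ω`. -/
def dGenPerm (ω : Seq) : Equiv.Perm (List Bool) := genPerm (ω 0) ω

/-- The subgroup of permutations fixing every word that does not have `u` as a prefix. -/
def awayStab (u : List Bool) : Subgroup (Equiv.Perm (List Bool)) where
  carrier := {f | ∀ w : List Bool, ¬ u <+: w → f w = w}
  one_mem' := by intro w _; rfl
  mul_mem' := by
    intro f g hf hg w hw
    rw [Equiv.Perm.mul_apply, hg w hw, hf w hw]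
  inv_mem' := by
    intro f hf w hw
    calc f⁻¹ w = f⁻¹ (f w) := by rw [hf w hw]
    _ = w := f.symm_apply_apply w

/-- The rigid vertex stabiliser `Rist_{G_ω}(u)`. -/
def Rist (ω : Seq) (u : List Bool) : Subgroup (Equiv.Perm (List Bool)) :=
  G ω ⊓ awayStab u

/-- The section map φ_u : for an automorphism `f` fixing the vertex `u`, the value
`sectionFun u f` is the section of `f` at `u` (as a map on words). -/
def sectionFun (u : List Bool) (f : Equiv.Perm (List Bool)) : List Bool → List Bool :=
  fun v => (f (u ++ v)).drop u.length

/-- The `d`-generator `x_ω` of `G_ω`, as an element of `G_ω`. -/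
def xGen (ω : Seq) : ↥(G ω) :=
  if ω 0 = 0 then ⟨d ω, Subgroup.subset_closure (by simp)⟩
  else if ω 0 = 1 then ⟨c ω, Subgroup.subset_closure (by simp)⟩
  else ⟨b ω, Subgroup.subset_closure (by simp)⟩

/-- The `c`-generator `y_ω` of `G_ω` (determined by ω_{m(ω)+1}), as an element of `G_ω`. -/
noncomputable def yGen (ω : Seq) : ↥(G ω) :=
  if ω (mval ω) = 0 then ⟨d ω, Subgroup.subset_closure (by simp)⟩
  else if ω (mval ω) = 1 then ⟨c ω, Subgroup.subset_closure (by simp)⟩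
  else ⟨b ω, Subgroup.subset_closure (by simp)⟩

open scoped Classical in
/-- The bound `M` of the main theorem. -/
noncomputable def Mval (ω : Seq) : ℕ :=
  if ∀ k : Fin 3, ∃ n, shift ω n = k then
    (Finset.univ.sup fun k : Fin 3 => ikFin k (shift ω)) + 4
  else if ∀ n, shift ω n = shift ω 0 then 4
  else ((Finset.univ.filter fun k : Fin 3 => ∃ n, shift ω n = k).sup
          fun k => ikFin k (shift ω)) + 4


end Grig

namespace Grig

/-! ### Auxiliary machinery -/

def pairFun (f g : List Bool → List Bool) : List Bool → List Bool
  | [] => []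
  | false :: w => false :: f w
  | true :: w => true :: g w

lemma pairFun_comp (f₁ g₁ f₂ g₂ : List Bool → List Bool) (w : List Bool) :
    pairFun f₁ g₁ (pairFun f₂ g₂ w) = pairFun (fun v => f₁ (f₂ v)) (fun v => g₁ (g₂ v)) w := by
  match w with
  | [] => rfl
  | false :: w => rfl
  | true :: w => rfl

/-- The pairing `(f,g) ↦ (f,g)` with sections `f` at 0 and `g` at 1. -/
def pp (f g : Equiv.Perm (List Bool)) : Equiv.Perm (List Bool) :=
  ⟨pairFun f g, pairFun f.symm g.symm,
   by intro w; rw [pairFun_comp]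
      match w with
      | [] => rfl
      | false :: w => simp [pairFun]
      | true :: w => simp [pairFun],
   by intro w; rw [pairFun_comp]
      match w with
      | [] => rfl
      | false :: w => simp [pairFun]
      | true :: w => simp [pairFun]⟩

@[simp] lemma pp_apply (f g : Equiv.Perm (List Bool)) (w : List Bool) :
    pp f g w = pairFun f g w := rfl

lemma pp_mul (f₁ g₁ f₂ g₂ : Equiv.Perm (List Bool)) :
    pp f₁ g₁ * pp f₂ g₂ = pp (f₁ * f₂) (g₁ * g₂) := by
  refine Equiv.ext fun w => ?_
  simp only [Equiv.Perm.mul_apply, pp_apply, pairFun_comp]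
  match w with
  | [] => rfl
  | false :: w => rfl
  | true :: w => rfl

lemma pp_one : pp 1 1 = 1 := by
  refine Equiv.ext fun w => ?_
  match w with
  | [] => rfl
  | false :: w => rfl
  | true :: w => rfl

/-- The pairing as a monoid hom. -/
def Phi : Equiv.Perm (List Bool) × Equiv.Perm (List Bool) →* Equiv.Perm (List Bool) where
  toFun p := pp p.1 p.2
  map_one' := pp_one
  map_mul' p q := by simp [Prod.fst_mul, Prod.snd_mul, pp_mul]

lemma Phi_injective : Function.Injective Phi := by
  rw [injective_iff_map_eq_one]
  rintro ⟨f, g⟩ hfg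
  have hf : f = 1 := by
    refine Equiv.ext fun w => ?_
    have := Equiv.ext_iff.1 hfg (false :: w)
    simpa [Phi, pairFun] using this
  have hg : g = 1 := by
    refine Equiv.ext fun w => ?_
    have := Equiv.ext_iff.1 hfg (true :: w)
    simpa [Phi, pairFun] using this
  simp [hf, hg, Prod.ext_iff]

lemma orderOf_pp (f g : Equiv.Perm (List Bool)) :
    orderOf (pp f g) = Nat.lcm (orderOf f) (orderOf g) := by
  have h1 : orderOf (Phi (f, g)) = orderOf (f, g) :=
    orderOf_injective Phi Phi_injective _
  have h2 : orderOf ((f, g) : Equiv.Perm (List Bool) × Equiv.Perm (List Bool)) =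
      Nat.lcm (orderOf f) (orderOf g) := Prod.orderOf _
  simpa [Phi] using h1.trans h2

lemma orderOf_mul_comm' {G : Type*} [Group G] (x y : G) :
    orderOf (x * y) = orderOf (y * x) := by
  have := orderOf_injective (MulAut.conj x⁻¹).toMonoidHom (MulEquiv.injective _) (x * y)
  simpa [mul_assoc] using this.symm

lemma aPerm_mul_self : aPerm * aPerm = 1 := by
  exact Equiv.ext fun w => aMap_invol w

lemma aPerm_inv : aPerm⁻¹ = aPerm := inv_eq_of_mul_eq_one_left aPerm_mul_self

lemma a_pp_a (f g : Equiv.Perm (List Bool)) :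
    aPerm * pp f g * aPerm = pp g f := by
  refine Equiv.ext fun w => ?_
  simp only [Equiv.Perm.mul_apply, pp_apply]
  match w with
  | [] => rfl
  | false :: w => rfl
  | true :: w => rfl

lemma gen_decomp (k : Fin 3) (ω : Seq) :
    genPerm k ω = pp (if ω 0 = k then 1 else aPerm) (genPerm k (shift ω)) := by
  refine Equiv.ext fun w => ?_
  show genMap k ω w = pairFun _ _ w
  match w with
  | [] => rfl
  | false :: w =>
      by_cases h : ω 0 = k <;> simp [genMap, pairFun, h, aPerm, aMap]
  | true :: w => rfl

lemma head_alt (f g : Equiv.Perm (List Bool)) (n : ℕ) (w : List Bool) :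
    ∃ w', ((aPerm * pp f g) ^ n) (false :: w) = (if Even n then false else true) :: w' := by
  induction n generalizing w with
  | zero => exact ⟨w, by simp⟩
  | succ n ih =>
      obtain ⟨w', hw⟩ := ih w
      refine ⟨if Even n then f w' else g w', ?_⟩
      rw [pow_succ', Equiv.Perm.mul_apply, hw]
      by_cases h : Even n <;>
        simp [h, Nat.even_add_one, Equiv.Perm.mul_apply, pairFun, aPerm, aMap]

lemma two_dvd_orderOf (f g : Equiv.Perm (List Bool)) :
    2 ∣ orderOf (aPerm * pp f g) := by
  rcases Nat.even_or_odd (orderOf (aPerm * pp f g)) with he | ho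
  · exact he.two_dvd
  · exfalso
    obtain ⟨w', hw⟩ := head_alt f g (orderOf (aPerm * pp f g)) []
    rw [pow_orderOf_eq_one] at hw
    rw [← Nat.not_even_iff_odd] at ho
    simp [ho] at hw

lemma orderOf_a_pp (f g : Equiv.Perm (List Bool)) :
    orderOf (aPerm * pp f g) = 2 * orderOf (f * g) := by
  have hsq : (aPerm * pp f g) ^ 2 = pp (g * f) (f * g) := by
    rw [sq, show aPerm * pp f g * (aPerm * pp f g) = (aPerm * pp f g * aPerm) * pp f g by
      group, a_pp_a, pp_mul]
  have h2 : orderOf ((aPerm * pp f g) ^ 2) = orderOf (f * g) := by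
    rw [hsq, orderOf_pp, orderOf_mul_comm' g f, Nat.lcm_self]
  obtain ⟨m, hm⟩ := two_dvd_orderOf f g
  have := orderOf_pow' (aPerm * pp f g) (n := 2) two_ne_zero
  rw [h2, hm] at this
  have hg : Nat.gcd (2 * m) 2 = 2 := Nat.gcd_eq_right ⟨m, rfl⟩
  rw [hg] at this
  omega

lemma gen_sq (k : Fin 3) (ω : Seq) : genPerm k ω * genPerm k ω = 1 := by
  exact Equiv.ext fun w => genMap_invol k w ω

lemma gen_inv (k : Fin 3) (ω : Seq) : (genPerm k ω)⁻¹ = genPerm k ω :=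
  inv_eq_of_mul_eq_one_left (gen_sq k ω)

lemma orderOf_gen_dvd_two (k : Fin 3) (ω : Seq) : orderOf (genPerm k ω) ∣ 2 :=
  orderOf_dvd_of_pow_eq_one (by rw [sq]; exact gen_sq k ω)

lemma genMap_witness (k : Fin 3) (n : ℕ) (ω : Seq) :
    genMap k ω (List.replicate n true ++ [false, true]) =
      List.replicate n true ++ [false, if ω n = k then true else false] := by
  induction n generalizing ω with
  | zero => by_cases h : ω 0 = k <;> simp [genMap, h, aMap]
  | succ n ih =>
      have : ((List.replicate (n+1) true ++ [false, true]) : List Bool)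
          = true :: (List.replicate n true ++ [false, true]) := by
        simp [List.replicate_succ]
      rw [this, genMap, ih]
      by_cases h : ω (n + 1) = k <;> simp [List.replicate_succ, shift, h]

lemma gen_ne_one (k : Fin 3) (ω : Seq) (n : ℕ) (hn : ω n ≠ k) :
    genPerm k ω ≠ 1 := by
  intro h1
  have := Equiv.ext_iff.1 h1 (List.replicate n true ++ [false, true])
  rw [show (genPerm k ω) (List.replicate n true ++ [false, true])
      = genMap k ω (List.replicate n true ++ [false, true]) from rfl,
    genMap_witness] at this
  simp [hn] at this

lemma orderOf_gen_eq_two (k : Fin 3) (ω : Seq) (n : ℕ) (hn : ω n ≠ k) :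
    orderOf (genPerm k ω) = 2 := by
  rcases (Nat.dvd_prime Nat.prime_two).1 (orderOf_gen_dvd_two k ω) with h | h
  · exact absurd (orderOf_eq_one_iff.1 h) (gen_ne_one k ω n hn)
  · exact h

lemma order_two_pow_base (k : Fin 3) (ω : Seq) (h0 : ω 0 = k) :
    ∃ j, 1 ≤ j ∧ orderOf (aPerm * genPerm k ω) = 2 ^ j := by
  rw [gen_decomp k ω, if_pos h0, orderOf_a_pp, one_mul]
  rcases (Nat.dvd_prime Nat.prime_two).1 (orderOf_gen_dvd_two k (shift ω)) with h | h
  · exact ⟨1, le_refl 1, by rw [h]; norm_num⟩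
  · exact ⟨2, by norm_num, by rw [h]; norm_num⟩

lemma order_two_pow (k : Fin 3) (n : ℕ) :
    ∀ ω : Seq, ω n = k → ∃ j, 1 ≤ j ∧ orderOf (aPerm * genPerm k ω) = 2 ^ j := by
  induction n with
  | zero => exact fun ω h => order_two_pow_base k ω h
  | succ n ih =>
      intro ω h
      by_cases h0 : ω 0 = k
      · exact order_two_pow_base k ω h0
      · obtain ⟨j, hj, hje⟩ := ih (shift ω) h
        refine ⟨j + 1, by omega, ?_⟩
        rw [gen_decomp k ω, if_neg h0, orderOf_a_pp, hje]
        ring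

lemma lcm_two_pow (i j : ℕ) : Nat.lcm (2 ^ i) (2 ^ j) = max (2 ^ i) (2 ^ j) := by
  rcases le_total i j with h | h
  · rw [max_eq_right (Nat.pow_le_pow_right (by norm_num) h)]
    exact Nat.dvd_antisymm (Nat.lcm_dvd (pow_dvd_pow 2 h) dvd_rfl) (Nat.dvd_lcm_right _ _)
  · rw [max_eq_left (Nat.pow_le_pow_right (by norm_num) h)]
    exact Nat.dvd_antisymm (Nat.lcm_dvd dvd_rfl (pow_dvd_pow 2 h)) (Nat.dvd_lcm_left _ _)

lemma lcm_two_pow_two (j : ℕ) (hj : 1 ≤ j) : Nat.lcm (2 ^ j) 2 = 2 ^ j := by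
  have : (2 : ℕ) ∣ 2 ^ j := by
    calc (2:ℕ) = 2 ^ 1 := (pow_one 2).symm
    _ ∣ 2 ^ j := pow_dvd_pow 2 hj
  exact Nat.dvd_antisymm (Nat.lcm_dvd dvd_rfl this) (Nat.dvd_lcm_left _ _)

end Grig

namespace Grig

/-- If all of `i_0(ω), i_1(ω), i_2(ω), i_0(σω), i_1(σω), i_2(σω)`
are finite, then `o(a c_ω a b_ω) = o(a b_ω a c_ω)`, and this common order equals
`max{o(a c_{σω}), o(a b_{σω})}` if ω₁ = 0, `o(a c_{σω})` if ω₁ = 1, and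
`o(a b_{σω})` if ω₁ = 2. -/
theorem orderOf_acab (ω : Seq) (h : ∀ k : Fin 3, ∃ m, ω m = k)
    (h' : ∀ k : Fin 3, ∃ m, shift ω m = k) :
    orderOf (aPerm * c ω * aPerm * b ω) = orderOf (aPerm * b ω * aPerm * c ω) ∧
    orderOf (aPerm * c ω * aPerm * b ω) =
      if ω 0 = 0 then
        max (orderOf (aPerm * c (shift ω))) (orderOf (aPerm * b (shift ω)))
      else if ω 0 = 1 then orderOf (aPerm * c (shift ω))
      else orderOf (aPerm * b (shift ω)) := by
  set c0 : Equiv.Perm (List Bool) := if ω 0 = 1 then 1 else aPerm with hc0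
  set b0 : Equiv.Perm (List Bool) := if ω 0 = 2 then 1 else aPerm with hb0
  set c' : Equiv.Perm (List Bool) := genPerm 1 (shift ω) with hc'
  set b' : Equiv.Perm (List Bool) := genPerm 2 (shift ω) with hb'
  have hcdec : c ω = pp c0 c' := gen_decomp 1 ω
  have hbdec : b ω = pp b0 b' := gen_decomp 2 ω
  have hACAB : orderOf (aPerm * c ω * aPerm * b ω)
      = Nat.lcm (orderOf (c' * b0)) (orderOf (c0 * b')) := by
    rw [hcdec, hbdec, show aPerm * pp c0 c' * aPerm * pp b0 b'
        = (aPerm * pp c0 c' * aPerm) * pp b0 b' from rfl, a_pp_a, pp_mul, orderOf_pp]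
  have hABAC : orderOf (aPerm * b ω * aPerm * c ω)
      = Nat.lcm (orderOf (b' * c0)) (orderOf (b0 * c')) := by
    rw [hcdec, hbdec, show aPerm * pp b0 b' * aPerm * pp c0 c'
        = (aPerm * pp b0 b' * aPerm) * pp c0 c' from rfl, a_pp_a, pp_mul, orderOf_pp]
  constructor
  · rw [hACAB, hABAC, orderOf_mul_comm' c' b0, orderOf_mul_comm' c0 b',
      Nat.lcm_comm]
  · -- order of aPerm * c' and aPerm * b' are powers of two
    obtain ⟨m1, hm1⟩ := h' 1
    obtain ⟨m2, hm2⟩ := h' 2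
    obtain ⟨m0, hm0⟩ := h' 0
    obtain ⟨j1, hj1, hje1⟩ := order_two_pow 1 m1 (shift ω) hm1
    obtain ⟨j2, hj2, hje2⟩ := order_two_pow 2 m2 (shift ω) hm2
    rw [hACAB]
    by_cases h0 : ω 0 = 0
    · have hcc : c0 = aPerm := by rw [hc0, if_neg (by rw [h0]; decide)]
      have hbb : b0 = aPerm := by rw [hb0, if_neg (by rw [h0]; decide)]
      rw [if_pos h0, hcc, hbb, orderOf_mul_comm' c' aPerm]
      show Nat.lcm (orderOf (aPerm * c')) (orderOf (aPerm * b'))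
        = max (orderOf (aPerm * genPerm 1 (shift ω))) (orderOf (aPerm * genPerm 2 (shift ω)))
      rw [← hc', ← hb', hje1, hje2, lcm_two_pow]
    · by_cases h1 : ω 0 = 1
      · have hcc : c0 = 1 := by rw [hc0, if_pos h1]
        have hbb : b0 = aPerm := by rw [hb0, if_neg (by rw [h1]; decide)]
        have hob' : orderOf b' = 2 := by
          rw [hb']
          exact orderOf_gen_eq_two 2 (shift ω) m0 (by rw [hm0]; decide)
        rw [if_neg h0, if_pos h1, hcc, hbb, one_mul, orderOf_mul_comm' c' aPerm]
        show Nat.lcm (orderOf (aPerm * c')) (orderOf b')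
          = orderOf (aPerm * genPerm 1 (shift ω))
        rw [← hc', hje1, hob', lcm_two_pow_two j1 hj1]
      · have h2 : ω 0 = 2 := by
          have hlt := (ω 0).isLt
          have v0 : (ω 0).val ≠ 0 := fun hv => h0 (Fin.ext hv)
          have v1 : (ω 0).val ≠ 1 := fun hv => h1 (Fin.ext hv)
          exact Fin.ext (by omega)
        have hcc : c0 = aPerm := by rw [hc0, if_neg (by rw [h2]; decide)]
        have hbb : b0 = 1 := by rw [hb0, if_pos h2]
        have hoc' : orderOf c' = 2 := by
          rw [hc']
          exact orderOf_gen_eq_two 1 (shift ω) m0 (by rw [hm0]; decide)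
        rw [if_neg h0, if_neg h1, hcc, hbb, mul_one]
        show Nat.lcm (orderOf c') (orderOf (aPerm * b'))
          = orderOf (aPerm * genPerm 2 (shift ω))
        rw [← hb', hje2, hoc', Nat.lcm_comm, lcm_two_pow_two j2 hj2]

end Grig
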